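/- Let α > 0 and β be real numbers and let λ be a real number. Then for every z > 0, the derivative of the function z ↦ z^{β−1} E_{α,β}(λ z^α) equals z^{β−2} E_{α,β−1}(λ z^α). -/

import Mathlib

open Filter Real Asymptotics

/-- Two-parameter Mittag-Leffler function `E_{α,β}(x) = ∑ₖ xᵏ / Γ(kα + β)`,
with the convention `1/Γ = 0` at the poles of `Γ` (in Mathlib, `Real.Gamma`
vanishes at nonpositive integers, so division by it gives `0` there). -/
noncomputable def mittagLeffler (a b x : ℝ) : ℝ := ∑' k : ℕ, x ^ k / Real.Gamma (k * a + b)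

/-!
For `y > 0` the function is the generalized power series
`y ^ (β - 1) * E_{α,β}(λ y ^ α) = ∑ₖ λᵏ / Γ(kα + β) * y ^ (kα + β - 1)`.
Differentiating term by term and using `(s - 1) / Γ(s) = 1 / Γ(s - 1)` (valid also at the poles)
gives the series of `z ^ (β - 2) * E_{α,β-1}(λ z ^ α)`. Termwise differentiation is justified by
domination on `(z/2, 2z)`, which reduces to absolute convergence of every `E_{α,b}`; that follows
from `Γ(t) ≥ ⌊t - 1⌋! ≥ S ^ ⌊t - 1⌋ e^{-S}` for `t ≥ 2`, with `S ^ α = 2|x| + 1` at the argument `x`.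
-/

open scoped Nat

namespace Real

theorem inv_Gamma_eq_self_mul_inv_Gamma_add_one (s : ℝ) :
    (Gamma s)⁻¹ = s * (Gamma (s + 1))⁻¹ := by
  rcases eq_or_ne s 0 with rfl | hs
  · simp
  · rw [Gamma_add_one hs, mul_inv, mul_inv_cancel_left₀ hs]

theorem inv_Gamma_le_exp_div_rpow {S t : ℝ} (hS : 1 ≤ S) (ht : 2 ≤ t) :
    (Gamma t)⁻¹ ≤ exp S / S ^ (t - 2) := by
  set m := ⌊t - 1⌋₊
  have hm : (m : ℝ) ≤ t - 1 := Nat.floor_le (by linarith)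
  have hm' : t - 1 < m + 1 := Nat.lt_floor_add_one _
  have hm1 : (1 : ℝ) ≤ m := by exact_mod_cast Nat.le_floor (by norm_num; linarith)
  have hfac_pos : (0 : ℝ) < m ! := by positivity
  have hfac : (m ! : ℝ) ≤ Gamma t := by
    rw [← Gamma_nat_eq_factorial]
    exact Gamma_strictMonoOn_Ici.monotoneOn (by simp; linarith) (by simp; linarith)
      (by linarith)
  have hpow : S ^ (t - 2) ≤ S ^ m := by
    rw [← rpow_natCast]
    exact rpow_le_rpow_of_exponent_le hS (by linarith)
  calc (Gamma t)⁻¹ ≤ (m ! : ℝ)⁻¹ := inv_anti₀ hfac_pos hfac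
    _ = S ^ m / m ! / S ^ m := by field_simp
    _ ≤ exp S / S ^ (t - 2) :=
      div_le_div₀ (exp_pos S).le (pow_div_factorial_le_exp _ (by linarith) m)
        (by positivity) hpow

theorem rpow_natCast_mul_add {y : ℝ} (hy : 0 < y) (k : ℕ) (a b : ℝ) :
    y ^ (k * a + b) = (y ^ a) ^ k * y ^ b := by
  rw [rpow_add hy, mul_comm (k : ℝ), rpow_mul_natCast hy.le]

theorem summable_norm_pow_div_Gamma {a : ℝ} (ha : 0 < a) (b x : ℝ) :
    Summable fun k : ℕ => ‖x ^ k / Gamma (k * a + b)‖ := by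
  set X := 2 * |x| + 1
  have hX : 0 < X := by positivity
  set S := X ^ a⁻¹
  have hS : 1 ≤ S := one_le_rpow (by linarith [abs_nonneg x]) (by positivity)
  have hSa : S ^ a = X := by rw [← rpow_mul hX.le, inv_mul_cancel₀ ha.ne', rpow_one]
  have hq : |x| / X ≤ 1 / 2 := by rw [div_le_iff₀ hX]; linarith
  set C := exp S / S ^ (b - 2)
  have hlarge : ∀ᶠ k : ℕ in atTop, 2 ≤ k * a + b :=
    (tendsto_atTop_add_const_right _ b
      (tendsto_natCast_atTop_atTop.atTop_mul_const ha)).eventually_ge_atTop 2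
  refine .of_norm_bounded_eventually_nat (summable_geometric_two.mul_left C) ?_
  filter_upwards [hlarge] with k ht
  rw [norm_norm, norm_div, norm_pow, norm_eq_abs, norm_of_nonneg (Gamma_pos_of_pos (by linarith)).le]
  calc |x| ^ k / Gamma (k * a + b) ≤ |x| ^ k * (exp S / S ^ (k * a + b - 2)) := by
        rw [div_eq_mul_inv]
        exact mul_le_mul_of_nonneg_left (inv_Gamma_le_exp_div_rpow hS ht) (by positivity)
    _ = C * (|x| / X) ^ k := by
        rw [add_sub_assoc, rpow_natCast_mul_add (by linarith), hSa, div_pow]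
        simp only [C]
        field_simp
    _ ≤ C * (1 / 2) ^ k := by gcongr

theorem hasDerivAt_tsum_mul_rpow {c : ℕ → ℝ} {a b z : ℝ} (ha : 0 ≤ a) (hz : 0 < z)
    (hc : Summable fun k => c k * (z ^ a) ^ k)
    (hc' : Summable fun k => ‖c k * (k * a + b) * ((2 * z) ^ a) ^ k‖) :
    HasDerivAt (fun y => ∑' k : ℕ, c k * y ^ (k * a + b))
      (∑' k : ℕ, c k * (k * a + b) * z ^ (k * a + b - 1)) z := by
  set M := max ((z / 2) ^ (b - 1)) ((2 * z) ^ (b - 1))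
  have hpos : ∀ y ∈ Set.Ioo (z / 2) (2 * z), 0 < y := fun y hy => by linarith [hy.1]
  have hM : ∀ y ∈ Set.Ioo (z / 2) (2 * z), y ^ (b - 1) ≤ M := by
    intro y hy
    rcases le_total 0 (b - 1) with h | h
    · exact (rpow_le_rpow (hpos y hy).le hy.2.le h).trans (le_max_right _ _)
    · exact (rpow_le_rpow_of_nonpos (by linarith) hy.1.le h).trans (le_max_left _ _)
  have hderiv : ∀ (k : ℕ), ∀ y ∈ Set.Ioo (z / 2) (2 * z), HasDerivAt
      (fun y => c k * y ^ (k * a + b)) (c k * (k * a + b) * y ^ (k * a + b - 1)) y := by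
    intro k y hy
    simpa only [mul_assoc] using
      (hasDerivAt_rpow_const (p := k * a + b) (Or.inl (hpos y hy).ne')).const_mul (c k)
  have hbound : ∀ (k : ℕ), ∀ y ∈ Set.Ioo (z / 2) (2 * z),
      ‖c k * (k * a + b) * y ^ (k * a + b - 1)‖ ≤ ‖c k * (k * a + b) * ((2 * z) ^ a) ^ k‖ * M := by
    intro k y hy
    have hy0 := hpos y hy
    calc ‖c k * (k * a + b) * y ^ (k * a + b - 1)‖
        = ‖c k * (k * a + b)‖ * ((y ^ a) ^ k * y ^ (b - 1)) := by
          rw [norm_mul, add_sub_assoc, rpow_natCast_mul_add hy0,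
            norm_of_nonneg (by positivity : (0 : ℝ) ≤ (y ^ a) ^ k * y ^ (b - 1))]
      _ ≤ ‖c k * (k * a + b)‖ * (((2 * z) ^ a) ^ k * M) := by
          gcongr
          · exact hy.2.le
          · exact hM y hy
      _ = ‖c k * (k * a + b) * ((2 * z) ^ a) ^ k‖ * M := by
          rw [norm_mul (c k * _), norm_of_nonneg (by positivity : (0 : ℝ) ≤ ((2 * z) ^ a) ^ k)]
          ring
  have hsum : Summable fun k : ℕ => c k * z ^ (k * a + b) := by
    simpa only [rpow_natCast_mul_add hz, mul_assoc] using hc.mul_right (z ^ b)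
  have hz_mem : z ∈ Set.Ioo (z / 2) (2 * z) := ⟨by linarith, by linarith⟩
  exact hasDerivAt_tsum_of_isPreconnected (hc'.mul_right M) isOpen_Ioo isPreconnected_Ioo
    hderiv hbound hz_mem hsum hz_mem

end Real

theorem rpow_mul_mittagLeffler (a b c lam : ℝ) {y : ℝ} (hy : 0 < y) :
    y ^ c * mittagLeffler a b (lam * y ^ a)
      = ∑' k : ℕ, lam ^ k / Gamma (k * a + b) * y ^ (k * a + c) := by
  rw [mittagLeffler, ← tsum_mul_left]
  congr 1 with k
  rw [rpow_natCast_mul_add hy, mul_pow]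
  ring

theorem pow_div_Gamma_mul_add_sub_one (lam a b : ℝ) (k : ℕ) :
    lam ^ k / Gamma (k * a + b) * (k * a + (b - 1)) = lam ^ k / Gamma (k * a + (b - 1)) := by
  rw [div_eq_mul_inv, div_eq_mul_inv, inv_Gamma_eq_self_mul_inv_Gamma_add_one (k * a + (b - 1)),
    show (k : ℝ) * a + (b - 1) + 1 = k * a + b by ring]
  ring

theorem mittagLeffler_deriv
    (α β lam : ℝ) (hα : 0 < α) :
    ∀ z > (0 : ℝ),
      deriv (fun z : ℝ => z ^ (β - 1) * mittagLeffler α β (lam * z ^ α)) z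
        = z ^ (β - 2) * mittagLeffler α (β - 1) (lam * z ^ α) := by
  intro z hz
  have hsummable : ∀ b x : ℝ, Summable fun k : ℕ => lam ^ k / Gamma (k * α + b) * x ^ k := by
    intro b x
    refine (summable_norm_pow_div_Gamma hα b (lam * x)).of_norm.congr fun k => ?_
    rw [mul_pow]
    ring
  have hderiv := hasDerivAt_tsum_mul_rpow (b := β - 1) hα.le hz (hsummable β _)
    (by simpa only [pow_div_Gamma_mul_add_sub_one] using (hsummable (β - 1) _).norm)
  have hlocal : (fun y => y ^ (β - 1) * mittagLeffler α β (lam * y ^ α))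
      =ᶠ[nhds z] fun y => ∑' k : ℕ, lam ^ k / Gamma (k * α + β) * y ^ (k * α + (β - 1)) :=
    (eventually_gt_nhds hz).mono fun y hy => rpow_mul_mittagLeffler α β (β - 1) lam hy
  rw [hlocal.deriv_eq, hderiv.deriv, rpow_mul_mittagLeffler α (β - 1) (β - 2) lam hz]
  congr 1 with k
  rw [pow_div_Gamma_mul_add_sub_one, add_sub_assoc, sub_sub, one_add_one_eq_two]
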